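/- Let (m,n) be a coprime pair of positive integers and let D be an (m,n)-Dyck path whose rank set R(D) differs from R_0 = {0,1,…,m+n−1}. Then area(D) = area(ℛ(D)) + 1, where ℛ(D) is the (m,n)-Dyck path with rank set ℛ(R(D)) = (R(D)∖{max R(D)}) ∪ {max R(D) − m − n}. -/

import Mathlib

/-- The list of ranks of the lattice points visited by a path (excluding the final
point), starting from rank `r`.  A `true` entry is a north (`u`) step, which adds `m`
to the rank; a `false` entry is an east (`d`) step, which subtracts `n`. -/
def rankWalk (m n : ℤ) : List Bool → ℤ → List ℤ
  | [], _ => []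
  | b :: bs, r => r :: rankWalk m n bs (r + if b then m else -n)

/-- An `(m,n)`-path: a word of `n` north steps (`true`) and `m` east steps (`false`). -/
def IsPathWord (m n : ℕ) (P : List Bool) : Prop :=
  P.length = m + n ∧ P.count true = n

/-- An `(m,n)`-Dyck path: an `(m,n)`-path all of whose ranks are nonnegative. -/
def IsDyckWord (m n : ℕ) (P : List Bool) : Prop :=
  IsPathWord m n P ∧ ∀ r ∈ rankWalk (m : ℤ) (n : ℤ) P 0, 0 ≤ r

/-- The rank set of a path: the ranks of its `m+n` lattice points other than the endpoint. -/
def rankSet (m n : ℕ) (P : List Bool) : Finset ℤ :=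
  (rankWalk (m : ℤ) (n : ℤ) P 0).toFinset

/-- `R` is the rank set of some `(m,n)`-path. -/
def IsRankSet (m n : ℕ) (R : Finset ℤ) : Prop :=
  ∃ P : List Bool, IsPathWord m n P ∧ rankSet m n P = R

/-- `R` is the rank set of some `(m,n)`-Dyck path. -/
def IsDyckRankSet (m n : ℕ) (R : Finset ℤ) : Prop :=
  ∃ P : List Bool, IsDyckWord m n P ∧ rankSet m n P = R

/-- The rank set `R₀ = {0, 1, …, m+n-1}` of the unique Dyck path of area `0`. -/
def baseRankSet (m n : ℕ) : Finset ℤ :=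
  (Finset.range (m + n)).image (fun i : ℕ => (i : ℤ))

/-- The right operation `ℛ(R) = (R \ {max R}) ∪ {max R - m - n}`. -/
def rightOp (m n : ℕ) (R : Finset ℤ) : Finset ℤ :=
  (R.erase (WithBot.unbotD 0 R.max)) ∪ {WithBot.unbotD 0 R.max - m - n}

/-- The lattice point of the path `P` reached after `i` steps. -/
def pathPt (P : List Bool) : ℕ → ℤ × ℤ
  | 0 => (0, 0)
  | i + 1 => pathPt P i + (if P.getD i false then (0, 1) else (1, 0))

/- `area P` is the number of unit lattice squares lying to the right of the path `P`
and to the left of the diagonal `y = (n/m)x`: the square with lower-left corner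
`(x, y)` is to the left of the diagonal iff its lower-right corner is weakly above
the diagonal, i.e. `n(x+1) ≤ my`, and it is to the right of the path iff the north
step of the path at height `y` starts at a point with first coordinate `≤ x`. -/
open Classical in

noncomputable def area (m n : ℕ) (P : List Bool) : ℕ :=
  ((Finset.range m ×ˢ Finset.range n).filter (fun q =>
      (n : ℤ) * (q.1 + 1) ≤ (m : ℤ) * q.2 ∧
      ∃ i < P.length, P.getD i false = true ∧
        (pathPt P i).2 = (q.2 : ℤ) ∧ (pathPt P i).1 ≤ (q.1 : ℤ))).card

/-! The ranks of the `m + n` lattice points of an `(m,n)`-path are pairwise incongruent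
modulo `m + n`, since the `i`-th one is `≡ -n i`. Counting the squares of a Dyck path row by
row gives `area = ∑ (⌊m y / n⌋ - x)` over its north steps from `(x, y)`; the floors and the
abscissae of the east steps sum to constants, and `(m + n) x = m i - rank` at the `i`-th
point, so `(m + n) · area` is a constant plus the sum of the ranks. The right operation lowers
that sum by exactly `m + n`. -/

open Finset

namespace List

theorem count_take_add_one (P : List Bool) (c : Bool) {i : ℕ} (hi : i < P.length) :
    (P.take (i + 1)).count c = (P.take i).count c + if P.getD i false = c then 1 else 0 := by
  rw [take_add_one, getElem?_eq_getElem hi, getD_eq_getElem _ _ hi, count_append]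
  split_ifs <;> simp_all

theorem count_take_true_add_count_take_false (P : List Bool) {i : ℕ} (hi : i ≤ P.length) :
    (P.take i).count true + (P.take i).count false = i := by
  rw [count_true_add_count_false, length_take_of_le hi]

theorem count_take_lt_count_take (P : List Bool) (c : Bool) {i j : ℕ} (hij : i < j)
    (hj : j ≤ P.length) (hc : P.getD i false = c) :
    (P.take i).count c < (P.take j).count c := by
  have hsucc := P.count_take_add_one c (hij.trans_le hj)
  have hmono : (P.take (i + 1)).count c ≤ (P.take j).count c :=
    (take_prefix_take_left hij).count_le c
  rw [if_pos hc] at hsucc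
  omega

theorem count_take_lt_count (P : List Bool) (c : Bool) {i : ℕ} (hi : i < P.length)
    (hc : P.getD i false = c) : (P.take i).count c < P.count c := by
  simpa using P.count_take_lt_count_take c hi le_rfl hc

end List

theorem sum_filter_getD_count_take {M : Type*} [AddCommGroup M] (P : List Bool) (c : Bool)
    (f : ℕ → M) :
    ∑ i ∈ (range P.length).filter (fun i => P.getD i false = c), f ((P.take i).count c) =
      ∑ k ∈ range (P.count c), f k := by
  have hstep : ∀ i ∈ range P.length,
      (if P.getD i false = c then f ((P.take i).count c) else 0) =
        ∑ k ∈ range ((P.take (i + 1)).count c), f k -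
          ∑ k ∈ range ((P.take i).count c), f k := by
    intro i hi
    rw [P.count_take_add_one c (mem_range.1 hi)]
    split_ifs <;> simp [sum_range_succ]
  rw [sum_filter, sum_congr rfl hstep,
    sum_range_sub (fun i => ∑ k ∈ range ((P.take i).count c), f k)]
  simp

def rankAt (m n : ℕ) (P : List Bool) (i : ℕ) : ℤ :=
  m * (P.take i).count true - n * (P.take i).count false

theorem rankWalk_eq_map (m n : ℕ) (P : List Bool) (r : ℤ) :
    rankWalk m n P r = (List.range P.length).map (fun i => r + rankAt m n P i) := by
  induction P generalizing r with
  | nil => rfl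
  | cons b bs ih =>
    rw [rankWalk, ih, List.length_cons, List.range_succ_eq_map]
    cases b <;> simp [rankAt] <;> intros <;> ring

theorem rankSet_eq_image (m n : ℕ) (P : List Bool) :
    rankSet m n P = (range P.length).image (rankAt m n P) := by
  ext r
  simp [rankSet, rankWalk_eq_map]

theorem rankAt_add_mul (m n : ℕ) (P : List Bool) {i : ℕ} (hi : i ≤ P.length) :
    rankAt m n P i + n * i = (m + n) * (P.take i).count true := by
  have h : ((P.take i).count true + (P.take i).count false : ℤ) = i := by
    exact_mod_cast P.count_take_true_add_count_take_false hi
  rw [rankAt]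
  linear_combination -(n : ℤ) * h

theorem IsDyckWord.rankAt_nonneg {m n : ℕ} {P : List Bool} (hP : IsDyckWord m n P) {i : ℕ}
    (hi : i < P.length) : 0 ≤ rankAt m n P i :=
  hP.2 _ (by rw [rankWalk_eq_map]; simpa using ⟨i, hi, rfl⟩)

section Coprime

variable {m n : ℕ} {P : List Bool}

theorem eq_of_dvd_rankAt_sub (hcop : m.Coprime n) (hlen : P.length = m + n) {i j : ℕ}
    (hi : i < m + n) (hj : j < m + n) (h : (m + n : ℤ) ∣ rankAt m n P i - rankAt m n P j) :
    i = j := by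
  have hdvd : (m + n : ℤ) ∣ n * ((i : ℤ) - j) := by
    have hi' := rankAt_add_mul m n P (i := i) (by omega)
    have hj' := rankAt_add_mul m n P (i := j) (by omega)
    have hdiff : (n : ℤ) * ((i : ℤ) - j) =
        (m + n) * ((P.take i).count true - (P.take j).count true) -
          (rankAt m n P i - rankAt m n P j) := by
      linear_combination hi' - hj'
    exact hdiff ▸ dvd_sub (dvd_mul_right _ _) h
  have hcop' : IsCoprime (m + n : ℤ) n := by
    exact_mod_cast (Nat.coprime_add_self_left.2 hcop).isCoprime
  have := Int.eq_zero_of_abs_lt_dvd (hcop'.dvd_of_dvd_mul_left hdvd)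
    (by rw [abs_sub_lt_iff]; omega)
  omega

theorem rankAt_injOn (hcop : m.Coprime n) (hlen : P.length = m + n) :
    Set.InjOn (rankAt m n P) (range (m + n)) := fun i hi j hj h =>
  eq_of_dvd_rankAt_sub hcop hlen (mem_range.1 hi) (mem_range.1 hj) (by simp [h])

theorem sum_rankSet (hcop : m.Coprime n) (hlen : P.length = m + n) :
    ∑ r ∈ rankSet m n P, r = ∑ i ∈ range (m + n), rankAt m n P i := by
  rw [rankSet_eq_image, hlen, sum_image (rankAt_injOn hcop hlen)]

theorem sub_notMem_rankSet (hcop : m.Coprime n) (hlen : P.length = m + n) {r : ℤ}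
    (hr : r ∈ rankSet m n P) : r - m - n ∉ rankSet m n P := by
  simp only [rankSet_eq_image, hlen, mem_image, mem_range] at hr ⊢
  obtain ⟨i, hi, rfl⟩ := hr
  rintro ⟨j, hj, hij⟩
  have := eq_of_dvd_rankAt_sub hcop hlen hi hj ⟨1, by rw [hij]; ring⟩
  subst this
  omega

end Coprime

theorem pathPt_eq (P : List Bool) {i : ℕ} (hi : i ≤ P.length) :
    pathPt P i = (((P.take i).count false : ℤ), ((P.take i).count true : ℤ)) := by
  induction i with
  | zero => simp [pathPt]
  | succ i ih =>
    rw [pathPt, ih (by omega), P.count_take_add_one true (by omega),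
      P.count_take_add_one false (by omega)]
    cases P.getD i false <;> simp

theorem area_eq_sum (m n : ℕ) (P : List Bool) (hcount : P.count true ≤ n) :
    area m n P = ∑ i ∈ (range P.length).filter (fun i => P.getD i false = true),
      (m * (P.take i).count true / n - (P.take i).count false) := by
  set N := (range P.length).filter (fun i => P.getD i false = true)
  set T : ℕ → Finset (ℕ × ℕ) := fun i =>
    Ico ((P.take i).count false) (m * (P.take i).count true / n) ×ˢ {(P.take i).count true}
  have hdisj : (N : Set ℕ).PairwiseDisjoint T := by
    intro i hi j hj hij
    simp only [coe_filter, mem_range, Set.mem_ofPred_eq, N] at hi hj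
    refine disjoint_product.2 (Or.inr (disjoint_singleton.2 fun h => ?_))
    rcases lt_or_gt_of_ne hij with hlt | hlt
    · exact (P.count_take_lt_count_take true hlt hj.1.le hi.2).ne h
    · exact (P.count_take_lt_count_take true hlt hi.1.le hj.2).ne' h
  calc area m n P = #(N.biUnion T) := by
        unfold area
        congr 1
        ext ⟨x, y⟩
        simp only [mem_filter, mem_product, mem_range, mem_biUnion, mem_Ico, mem_singleton, N, T]
        constructor
        · rintro ⟨-, hdiag, i, hi, hN, hy, hx⟩
          simp only [pathPt_eq P hi.le, Nat.cast_inj, Nat.cast_le] at hy hx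
          subst hy
          have hn : 0 < n := ((P.count_take_lt_count true hi hN).trans_le hcount).pos
          refine ⟨i, ⟨hi, hN⟩, ⟨hx, ?_⟩, rfl⟩
          rw [Nat.lt_iff_add_one_le, Nat.le_div_iff_mul_le hn]
          exact_mod_cast (mul_comm _ _).trans_le hdiag
        · rintro ⟨i, ⟨hi, hN⟩, ⟨hx, hxlt⟩, rfl⟩
          have hyn := (P.count_take_lt_count true hi hN).trans_le hcount
          have hdiag := (Nat.le_div_iff_mul_le hyn.pos).1 (Nat.lt_iff_add_one_le.1 hxlt)
          refine ⟨⟨?_, hyn⟩, ?_, i, hi, hN, ?_⟩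
          · exact hxlt.trans_le (Nat.div_le_of_le_mul (by rw [mul_comm]; gcongr))
          · exact_mod_cast (mul_comm _ _).trans_le hdiag
          · simpa [pathPt_eq P hi.le] using hx
    _ = _ := by
        rw [card_biUnion hdisj]
        simp [T]

theorem add_mul_sum_count_take_false (m n : ℕ) (P : List Bool) :
    (m + n) * ∑ i ∈ range P.length, ((P.take i).count false : ℤ) =
      m * ∑ i ∈ range P.length, (i : ℤ) - ∑ i ∈ range P.length, rankAt m n P i := by
  rw [mul_sum, mul_sum, ← sum_sub_distrib]
  refine sum_congr rfl fun i hi => ?_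
  have hcount : ((P.take i).count true + (P.take i).count false : ℤ) = i := by
    exact_mod_cast P.count_take_true_add_count_take_false (mem_range.1 hi).le
  rw [rankAt]
  linear_combination (m : ℤ) * hcount

theorem IsDyckWord.area_eq {m n : ℕ} {P : List Bool} (hP : IsDyckWord m n P) :
    (area m n P : ℤ) = ∑ k ∈ range n, ((m * k / n : ℕ) : ℤ) -
      ∑ i ∈ (range P.length).filter (fun i => P.getD i false = true),
        ((P.take i).count false : ℤ) := by
  have hcount := hP.1.2
  have hle : ∀ i ∈ (range P.length).filter (fun i => P.getD i false = true),
      (P.take i).count false ≤ m * (P.take i).count true / n := by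
    intro i hi
    rw [mem_filter, mem_range] at hi
    have hn := ((P.count_take_lt_count true hi.1 hi.2).trans_le hcount.le).pos
    have hrank := hP.rankAt_nonneg hi.1
    rw [rankAt, sub_nonneg] at hrank
    rw [Nat.le_div_iff_mul_le hn, mul_comm]
    exact_mod_cast hrank
  rw [area_eq_sum m n P hcount.le, Nat.cast_sum, sum_congr rfl fun i hi => Nat.cast_sub (hle i hi),
    sum_sub_distrib, sum_filter_getD_count_take P true (fun k => ((m * k / n : ℕ) : ℤ)), hcount]

theorem IsDyckWord.mul_area_eq {m n : ℕ} {P : List Bool} (hcop : m.Coprime n)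
    (hP : IsDyckWord m n P) :
    ((m + n) * area m n P : ℤ) =
      (m + n) * ((∑ k ∈ range n, m * k / n + ∑ k ∈ range m, k : ℕ) : ℤ)
        - m * ∑ i ∈ range (m + n), (i : ℤ) + ∑ r ∈ rankSet m n P, r := by
  obtain ⟨hlen, hcount⟩ := hP.1
  have hcount_false : P.count false = m := by
    have := P.count_true_add_count_false
    omega
  have heast : ∑ i ∈ (range P.length).filter (fun i => P.getD i false = false),
      ((P.take i).count false : ℤ) = ∑ k ∈ range m, (k : ℤ) := by
    rw [sum_filter_getD_count_take P false (fun k => (k : ℤ)), hcount_false]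
  have hsplit := sum_filter_add_sum_filter_not (range P.length)
    (fun i => P.getD i false = true) (fun i => ((P.take i).count false : ℤ))
  simp only [Bool.not_eq_true] at hsplit
  have htotal := add_mul_sum_count_take_false m n P
  rw [sum_rankSet hcop hlen, ← hlen]
  simp only [Nat.cast_add, Nat.cast_sum]
  linear_combination (m + n : ℤ) * (hP.area_eq + heast - hsplit) - htotal

theorem sum_rightOp (m n : ℕ) {R : Finset ℤ} (hR : R.Nonempty)
    (h : ∀ r ∈ R, r - m - n ∉ R) :
    ∑ r ∈ rightOp m n R, r = ∑ r ∈ R, r - (m + n) := by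
  have hmax : WithBot.unbotD 0 R.max = R.max' hR := by rw [← coe_max' hR]; rfl
  have hM := R.max'_mem hR
  rw [rightOp, hmax, sum_union (disjoint_singleton_right.2 fun hmem =>
    h _ hM (mem_of_mem_erase hmem)), sum_singleton, ← add_sum_erase R _ hM]
  ring

theorem area_rightOp_general (m n : ℕ) (hcop : Nat.Coprime m n)
    (P P' : List Bool) (hP : IsDyckWord m n P)
    (hP' : IsDyckWord m n P') (hRP' : rankSet m n P' = rightOp m n (rankSet m n P)) :
    area m n P = area m n P' + 1 := by
  have hlen := hP.1.1
  have hmn : 0 < m + n := by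
    by_contra h
    simp_all [Nat.Coprime]
  have hR : (rankSet m n P).Nonempty := by
    rw [rankSet_eq_image, hlen]
    exact (nonempty_range_iff.2 hmn.ne').image _
  have hsum : ∑ r ∈ rankSet m n P', r = ∑ r ∈ rankSet m n P, r - (m + n) := by
    rw [hRP']
    exact sum_rightOp m n hR fun r hr => sub_notMem_rankSet hcop hlen hr
  have key : (m + n : ℤ) * area m n P = (m + n) * (area m n P' + 1) := by
    linear_combination hP.mul_area_eq hcop - hP'.mul_area_eq hcop - hsum
  exact_mod_cast mul_left_cancel₀ (by omega) key

/-- For an `(m,n)`-Dyck path `D` with rank set `R(D) ≠ R₀`, we have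
`area(D) = area(ℛ(D)) + 1`, where `ℛ(D)` is the `(m,n)`-Dyck path with rank set
`ℛ(R(D)) = (R(D) \ {max R(D)}) ∪ {max R(D) - m - n}`. -/
theorem area_rightOp (m n : ℕ) (hm : 0 < m) (hn : 0 < n) (hcop : Nat.Coprime m n)
    (P P' : List Bool) (hP : IsDyckWord m n P) (hne : rankSet m n P ≠ baseRankSet m n)
    (hP' : IsDyckWord m n P') (hRP' : rankSet m n P' = rightOp m n (rankSet m n P)) :
    area m n P = area m n P' + 1 :=
  area_rightOp_general m n hcop P P' hP hP' hRP'
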